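/- Let K be a finite field of characteristic different from 2 and let a, b be nonzero elements of K with a ≠ b, a ∉ {1, −1} and b ∉ {1, −1}. If Δ₁ := a² + 4·a·b^{−1}·(a·b^{−1} − 1) and Δ₂ := b² + 4·a^{−1}·b·(a^{−1}·b − 1) are both non-squares in K, then the (a,b)-dynomial minimal solution over K is irreducible. -/

import Mathlib

/-!
With `t = a b - 2` and `Sₙ = Sₙ(t)` the rescaled Chebyshev polynomials of the second kind,
`M_{2j}(a,b,…,a,b)` has entries linear in `S_{j-1}` and `S_j`; it is `± Id` as soon as
`S_{j-1} = 0`, so minimality gives `Sᵢ ≠ 0` for `i + 1 < k`. If the dynomial were equivalent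
to `x ⊕ y` with `y = (u, w, v)` a λ-quiddity, the middle part `w` would be a nonempty
alternating segment of size at most `2k - 3`, and `M(y) = ± Id` forces the `(0,0)` entry of
`M(w)` to be `± 1`. For `|w| = 2j + 2` that entry is `S_j + S_{j+1}`, and Cassini's identity
`S_j² + S_{j+1}² - t S_j S_{j+1} = 1` turns this into `a b S_j S_{j+1} = 0`, against
minimality. For `|w|` odd, `w = (c, d, …, c)` with `{c, d} = {a, b}`, the entry is `c S_j`,
and Cassini's identity makes `(ab)² - 4ab + 4c²`, a nonzero square multiple of `Δ₁` or `Δ₂`,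
a square.
-/

namespace Quiddity

variable {A : Type*} [CommRing A]

/-- `mMat [a₁, …, aₙ]` is the matrix product `[[aₙ,-1],[1,0]] ⋯ [[a₁,-1],[1,0]]`. -/
def mMat : List A → Matrix (Fin 2) (Fin 2) A
  | [] => 1
  | a :: t => mMat t * !![a, -1; 1, 0]

/-- Continuant: `cont [] = K₀ = 1`, `cont [a] = K₁(a) = a`, and the continuant recursion. -/
def cont : List A → A
  | [] => 1
  | [a] => a
  | a :: b :: t => a * cont (b :: t) - cont t

/-- A λ-quiddity is a tuple with `Mₙ(a₁,…,aₙ) = ± Id`. -/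
def IsQuiddity (l : List A) : Prop := mMat l = 1 ∨ mMat l = -1

/-- The sum `⊕` of two tuples (meaningful for tuples of length ≥ 2):
`(a₁,…,aₘ) ⊕ (b₁,…,b_l) = (a₁+b_l, a₂,…,a_{m−1}, aₘ+b₁, b₂,…,b_{l−1})`. -/
def oplus (la lb : List A) : List A :=
  (la.headD 0 + lb.getLastD 0) ::
    (la.tail.dropLast ++ (la.getLastD 0 + lb.headD 0) :: lb.tail.dropLast)

/-- Two tuples are equivalent if one is a cyclic permutation of the other or of its
reversal. -/
def TupleEquiv (l l' : List A) : Prop :=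
  List.IsRotated l l' ∨ List.IsRotated l.reverse l'

/-- A λ-quiddity `c` is reducible if `c ∼ a ⊕ b` with `b` a λ-quiddity and both of size ≥ 3. -/
def QuiddityReducible (c : List A) : Prop :=
  ∃ a b : List A, 3 ≤ a.length ∧ 3 ≤ b.length ∧ IsQuiddity b ∧ TupleEquiv c (oplus a b)

/-- `(a, b, a, b, …, a, b)` with `k` repetitions of the pair `(a, b)` (size `2k`). -/
def dynList : ℕ → A → A → List A
  | 0, _, _ => []
  | k + 1, a, b => a :: b :: dynList k a b

/-- `(u, v, v, u, v, v, …, u, v, v)` with `k` repetitions of the block `(u, v, v)`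
(size `3k`). -/
def triList : ℕ → A → A → List A
  | 0, _, _ => []
  | k + 1, a, b => a :: b :: b :: triList k a b

end Quiddity

open Quiddity

namespace Quiddity

open Polynomial Polynomial.Chebyshev

section Lists

variable {α : Type*}

theorem length_dynList (k : ℕ) (a b : α) : (dynList k a b).length = 2 * k := by
  induction k with
  | zero => rfl
  | succ k ih => simp only [dynList, List.length_cons, ih]; ring

theorem dynList_succ_eq_append (k : ℕ) (a b : α) :
    dynList (k + 1) a b = dynList k a b ++ [a, b] := by
  induction k with
  | zero => rfl
  | succ k ih => exact congrArg (a :: b :: ·) ih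

theorem cons_dynList (k : ℕ) (a b : α) : b :: dynList k a b = dynList k b a ++ [b] := by
  induction k with
  | zero => rfl
  | succ k ih => simp [dynList, ih]

theorem dynList_rotate_one (k : ℕ) (a b : α) : (dynList k a b).rotate 1 = dynList k b a := by
  cases k with
  | zero => rfl
  | succ k =>
    show (a :: b :: dynList k a b).rotate 1 = dynList (k + 1) b a
    rw [List.rotate_cons_succ, List.rotate_zero, cons_dynList,
      List.append_assoc, dynList_succ_eq_append]
    rfl

theorem dynList_rotate (k i : ℕ) (a b : α) :
    (dynList k a b).rotate i = dynList k a b ∨ (dynList k a b).rotate i = dynList k b a := by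
  induction i with
  | zero => simp
  | succ i ih =>
    rw [← List.rotate_rotate]
    rcases ih with h | h <;> simp [h, dynList_rotate_one]

theorem reverse_dynList (k : ℕ) (a b : α) : (dynList k a b).reverse = dynList k b a := by
  induction k with
  | zero => rfl
  | succ k ih =>
    show (a :: b :: dynList k a b).reverse = dynList (k + 1) b a
    simp [dynList_succ_eq_append, ih]

theorem eq_dynList_of_tupleEquiv {k : ℕ} {a b : α} {l : List α}
    (h : TupleEquiv (dynList k a b) l) : l = dynList k a b ∨ l = dynList k b a := by
  rcases h with ⟨i, rfl⟩ | ⟨i, rfl⟩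
  · exact dynList_rotate k i a b
  · rw [reverse_dynList]
    exact (dynList_rotate k i b a).symm

theorem eq_dynList_of_suffix {k : ℕ} {c d : α} {w : List α} (h : w <:+ dynList k c d) :
    (∃ j, w = dynList j c d) ∨ ∃ j, w = dynList j d c ++ [d] := by
  induction k with
  | zero => exact Or.inl ⟨0, List.eq_nil_of_suffix_nil h⟩
  | succ k ih =>
    rcases List.suffix_cons_iff.mp h with h | h
    · exact Or.inl ⟨k + 1, h⟩
    rcases List.suffix_cons_iff.mp h with h | h
    · exact Or.inr ⟨k, h.trans (cons_dynList k c d)⟩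
    · exact ih h

theorem exists_eq_cons_append_singleton {l : List α} (h : 2 ≤ l.length) :
    ∃ u w v, l = u :: w ++ [v] := by
  obtain ⟨u, t, rfl⟩ := List.exists_cons_of_length_pos (by omega : 0 < l.length)
  have ht : t ≠ [] := List.ne_nil_of_length_pos (by simp only [List.length_cons] at h; omega)
  exact ⟨u, t.dropLast, t.getLast ht, by rw [List.cons_append, List.dropLast_append_getLast]⟩

end Lists

section CommRing

variable {A : Type*} [CommRing A]

theorem mMat_append (s r : List A) : mMat (s ++ r) = mMat r * mMat s := by
  induction s with
  | nil => simp [mMat]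
  | cons a s ih => simp [mMat, ih, mul_assoc]

theorem eval_S_sq_add_eval_S_sq (t : A) (n : ℤ) :
    (S A n).eval t ^ 2 + (S A (n + 1)).eval t ^ 2 - t * (S A n).eval t * (S A (n + 1)).eval t
      = 1 := by
  simpa using congrArg (eval t) (S_sq_add_S_sq A n)

theorem mMat_dynList (c d : A) (j : ℕ) :
    mMat (dynList j c d) =
      !![(S A (j - 1)).eval (c * d - 2) + (S A j).eval (c * d - 2),
          -(d * (S A (j - 1)).eval (c * d - 2));
        c * (S A (j - 1)).eval (c * d - 2),
          (S A j).eval (c * d - 2) - (c * d - 1) * (S A (j - 1)).eval (c * d - 2)] := by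
  induction j with
  | zero => simp [dynList, mMat, Matrix.one_fin_two]
  | succ j ih =>
    have hrec := congrArg (eval (c * d - 2)) (S_add_one A j)
    simp only [eval_sub, eval_mul, eval_X] at hrec
    simp only [dynList, mMat, ih, Nat.cast_add, Nat.cast_one, add_sub_cancel_right, hrec]
    ext i l
    fin_cases i <;> fin_cases l <;> simp [Matrix.mul_apply, Fin.sum_univ_two] <;> ring

theorem mMat_dynList_append_zero_zero (c d : A) (j : ℕ) :
    mMat (dynList j c d ++ [c]) 0 0 = c * (S A j).eval (c * d - 2) := by
  simp only [mMat_append, mMat, one_mul, mMat_dynList, Matrix.mul_apply, Matrix.of_apply,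
    Matrix.cons_val', Matrix.cons_val_fin_one, Matrix.cons_val_zero, Fin.sum_univ_two,
    Matrix.cons_val_one]
  ring

theorem mMat_zero_zero_sq_of_isQuiddity {u v : A} {w : List A}
    (h : IsQuiddity (u :: w ++ [v])) : mMat w 0 0 ^ 2 = 1 := by
  have hsplit : mMat (u :: w ++ [v]) = !![v, -1; 1, 0] * (mMat w * !![u, -1; 1, 0]) := by
    simp [mMat_append, mMat]
  have h11 : mMat (u :: w ++ [v]) 1 1 = -mMat w 0 0 := by
    rw [hsplit]
    simp [Matrix.mul_apply, Fin.sum_univ_two]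
  rcases h with h | h <;> rw [h] at h11 <;>
    simp only [Matrix.one_apply_eq, Matrix.neg_apply, neg_inj] at h11
  · rw [← neg_sq, ← h11, one_pow]
  · rw [← h11, one_pow]

theorem mul_eval_S_mul_eval_S_eq_zero_of_isQuiddity {c d u v : A} (j : ℕ)
    (h : IsQuiddity (u :: dynList (j + 1) c d ++ [v])) :
    c * d * ((S A j).eval (c * d - 2) * (S A (j + 1)).eval (c * d - 2)) = 0 := by
  have hsq := mMat_zero_zero_sq_of_isQuiddity h
  simp only [mMat_dynList, Nat.cast_add, Nat.cast_one, add_sub_cancel_right] at hsq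
  simp only [Matrix.of_apply, Matrix.cons_val', Matrix.cons_val_zero, Matrix.empty_val',
    Matrix.cons_val_fin_one] at hsq
  linear_combination hsq - eval_S_sq_add_eval_S_sq (c * d - 2) j

theorem isSquare_of_isQuiddity_dynList_append {c d u v : A} (j : ℕ)
    (h : IsQuiddity (u :: (dynList j c d ++ [c]) ++ [v])) :
    IsSquare ((c * d) ^ 2 - 4 * (c * d) + 4 * c ^ 2) := by
  have hsq := mMat_zero_zero_sq_of_isQuiddity h
  rw [mMat_dynList_append_zero_zero] at hsq
  have hcassini := eval_S_sq_add_eval_S_sq (c * d - 2) (j - 1)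
  rw [sub_add_cancel] at hcassini
  exact ⟨c * (2 * (S A (j - 1)).eval (c * d - 2) - (c * d - 2) * (S A j).eval (c * d - 2)),
    by linear_combination (-4 * c ^ 2) * hcassini + (4 - (c * d - 2) ^ 2) * hsq⟩

theorem isQuiddity_dynList_of_eval_S_eq_zero [NoZeroDivisors A] {c d : A} {j : ℕ}
    (h : (S A j).eval (c * d - 2) = 0) : IsQuiddity (dynList (j + 1) c d) := by
  have hsq : (S A (j + 1)).eval (c * d - 2) ^ 2 = 1 := by
    simpa [h] using eval_S_sq_add_eval_S_sq (c * d - 2) j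
  have hM : mMat (dynList (j + 1) c d) =
      Matrix.scalar (Fin 2) ((S A (j + 1)).eval (c * d - 2)) := by
    rw [mMat_dynList]
    push_cast
    simp only [add_sub_cancel_right, h]
    ext i l
    fin_cases i <;> fin_cases l <;> simp
  rcases sq_eq_one_iff.mp hsq with h1 | h1 <;>
    simp only [IsQuiddity, hM, h1, map_neg, map_one] <;> simp

theorem oplus_cons_append (u' v' u v : A) (xw w : List A) :
    oplus (u' :: xw ++ [v']) (u :: w ++ [v]) = (u' + v) :: (xw ++ (v' + u) :: w) := by
  simp [oplus, List.getLast?_cons]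

end CommRing

section Field

variable {K : Type*} [Field K]

theorem not_isQuiddity_of_suffix_dynList {c d u v : K} {k : ℕ} {w : List K}
    (hcd : c * d ≠ 0) (hΔ : ¬ IsSquare ((c * d) ^ 2 - 4 * (c * d) + 4 * d ^ 2))
    (hS : ∀ i : ℕ, i + 1 < k → (S K i).eval (c * d - 2) ≠ 0)
    (hw : w <:+ dynList k c d) (hw0 : w ≠ []) (hwk : w.length + 3 ≤ 2 * k) :
    ¬ IsQuiddity (u :: w ++ [v]) := by
  intro hq
  rcases eq_dynList_of_suffix hw with ⟨j, rfl⟩ | ⟨j, rfl⟩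
  · obtain ⟨j, rfl⟩ : ∃ i, j = i + 1 :=
      Nat.exists_eq_add_one.mpr (Nat.pos_of_ne_zero (by rintro rfl; exact hw0 rfl))
    rw [length_dynList] at hwk
    rcases mul_eq_zero.mp (mul_eval_S_mul_eval_S_eq_zero_of_isQuiddity j hq) with h | h
    · exact hcd h
    rcases mul_eq_zero.mp h with h | h
    · exact hS j (by omega) h
    · exact hS (j + 1) (by omega) (by exact_mod_cast h)
  · apply hΔ
    simpa only [mul_comm d c] using isSquare_of_isQuiddity_dynList_append j hq

theorem not_quiddityReducible_dynList {a b : K} {k : ℕ} (ha : a ≠ 0) (hb : b ≠ 0)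
    (hΔa : ¬ IsSquare ((a * b) ^ 2 - 4 * (a * b) + 4 * a ^ 2))
    (hΔb : ¬ IsSquare ((a * b) ^ 2 - 4 * (a * b) + 4 * b ^ 2))
    (hS : ∀ i : ℕ, i + 1 < k → (S K i).eval (a * b - 2) ≠ 0) :
    ¬ QuiddityReducible (dynList k a b) := by
  rintro ⟨x, y, hx, hy, hyq, hequiv⟩
  obtain ⟨u', xw, v', rfl⟩ := exists_eq_cons_append_singleton (by omega : 2 ≤ x.length)
  obtain ⟨u, w, v, rfl⟩ := exists_eq_cons_append_singleton (by omega : 2 ≤ y.length)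
  simp only [List.length_append, List.length_cons, List.length_nil] at hx hy
  rw [oplus_cons_append] at hequiv
  have hsuffix : ∀ {c d : K}, (u' + v) :: (xw ++ (v' + u) :: w) = dynList k c d →
      w <:+ dynList k c d ∧ w.length + 3 ≤ 2 * k := by
    intro c d h
    refine ⟨h ▸ ⟨(u' + v) :: xw ++ [v' + u], by simp⟩, ?_⟩
    have := congrArg List.length h
    simp only [List.length_cons, List.length_append, length_dynList] at this
    omega
  have hw0 : w ≠ [] := List.ne_nil_of_length_pos (by omega)
  rcases eq_dynList_of_tupleEquiv hequiv with h | h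
  · obtain ⟨hw, hwk⟩ := hsuffix h
    exact not_isQuiddity_of_suffix_dynList (mul_ne_zero ha hb) hΔb hS hw hw0 hwk hyq
  · obtain ⟨hw, hwk⟩ := hsuffix h
    rw [mul_comm a b] at hΔa hS
    exact not_isQuiddity_of_suffix_dynList (mul_ne_zero hb ha) hΔa hS hw hw0 hwk hyq

end Field

end Quiddity

theorem stmt10_general (K : Type*) [Field K]
    (a b : K) (ha0 : a ≠ 0) (hb0 : b ≠ 0)
    (hΔ1 : ¬ IsSquare (a ^ 2 + 4 * (a * b⁻¹) * (a * b⁻¹ - 1)))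
    (hΔ2 : ¬ IsSquare (b ^ 2 + 4 * (a⁻¹ * b) * (a⁻¹ * b - 1)))
    (k : ℕ)
    (hmin : ∀ j, 0 < j → IsQuiddity (dynList j a b) → k ≤ j) :
    ¬ QuiddityReducible (dynList k a b) := by
  refine not_quiddityReducible_dynList ha0 hb0 ?_ ?_ fun i hi h => ?_
  · rintro ⟨r, hr⟩
    refine hΔ1 ⟨r * b⁻¹, ?_⟩
    field_simp
    linear_combination hr
  · rintro ⟨r, hr⟩
    refine hΔ2 ⟨r * a⁻¹, ?_⟩
    field_simp
    linear_combination hr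
  · have := hmin (i + 1) i.succ_pos (isQuiddity_dynList_of_eval_S_eq_zero h)
    omega

/-- over a finite field of characteristic ≠ 2, if the two discriminants
`Δ₁` and `Δ₂` are non-squares then the `(a,b)`-dynomial minimal solution is irreducible. -/
theorem stmt10 (K : Type*) [Field K] [Fintype K] (hchar : ringChar K ≠ 2)
    (a b : K) (ha0 : a ≠ 0) (hb0 : b ≠ 0) (hab : a ≠ b)
    (ha1 : a ≠ 1) (ha1' : a ≠ -1) (hb1 : b ≠ 1) (hb1' : b ≠ -1)
    (hΔ1 : ¬ IsSquare (a ^ 2 + 4 * (a * b⁻¹) * (a * b⁻¹ - 1)))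
    (hΔ2 : ¬ IsSquare (b ^ 2 + 4 * (a⁻¹ * b) * (a⁻¹ * b - 1)))
    (k : ℕ) (hk : 0 < k)
    (hq : IsQuiddity (dynList k a b))
    (hmin : ∀ j, 0 < j → IsQuiddity (dynList j a b) → k ≤ j) :
    ¬ QuiddityReducible (dynList k a b) :=
  stmt10_general K a b ha0 hb0 hΔ1 hΔ2 k hmin
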